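/- For all integers k, ℓ ≥ 1 and every n ∈ ℤ, the (k+2)×(k+2) determinant det( f(n+ℓ·(i−j), x, q^{j·ℓ}·s)^k )_{i,j=0}^{k+1} is zero. -/

import Mathlib

/-!
Write `F_j(m) = f(m - jℓ, x, q^{jℓ} s)`. Since `q^{m - jℓ} · q^{jℓ} s = q^m s`, every `F_j`
solves the same second-order recurrence `F(m+2) = x F(m+1) + q^m s F(m)`, whose solution space
is spanned by `m ↦ f(m, x, s)` and `m ↦ f(m+1, x, s/q)`. Hence the `(i, j)` entry is
`(a_i u_j + b_i v_j)^k`, and by the binomial theorem the matrix factors through `K^{k+1}`, so its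
`k+2` columns are dependent.
-/

open Finset

variable {K : Type*} [Field K]

noncomputable def qFibPos (q x t : K) : ℕ → K
  | 0 => 0
  | 1 => 1
  | n + 2 => x * qFibPos q x t (n + 1) + q ^ n * t * qFibPos q x t n

noncomputable def qFibNeg (q x t : K) : ℕ → K
  | 0 => 0
  | 1 => q / t
  | m + 2 => (qFibNeg q x t m - x * qFibNeg q x t (m + 1)) * q ^ (m + 2) / t

/-- The Carlitz q-Fibonacci polynomial `f(n, x, t)` for `n : ℤ`, defined by `f 0 = 0`,
`f 1 = 1` and `f n = x * f (n-1) + q^(n-2) * t * f (n-2)`, solved backwards for `n < 0`. -/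
noncomputable def qFib (q x t : K) : ℤ → K
  | Int.ofNat n => qFibPos q x t n
  | Int.negSucc m => qFibNeg q x t (m + 1)

section

variable {q x t : K}

def IsQFibSolution (q x t : K) (F : ℤ → K) : Prop :=
  ∀ m : ℤ, F (m + 2) = x * F (m + 1) + q ^ m * t * F m

lemma isQFibSolution_qFib (hq : q ≠ 0) (ht : t ≠ 0) : IsQFibSolution q x t (qFib q x t) := by
  rintro (n | _ | _ | j)
  · show qFibPos q x t (n + 2) = x * qFibPos q x t (n + 1) + q ^ (n : ℤ) * t * qFibPos q x t n
    rw [zpow_natCast]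
    rfl
  · show (1 : K) = x * 0 + q ^ (-1 : ℤ) * t * (q / t)
    field_simp
    ring
  · show (0 : K) = x * (q / t) + q ^ (-2 : ℤ) * t * ((0 - x * (q / t)) * q ^ 2 / t)
    field_simp
    ring
  · show qFibNeg q x t (j + 1) = x * qFibNeg q x t (j + 2) + q ^ (-(j + 3 : ℕ) : ℤ) * t *
      ((qFibNeg q x t (j + 1) - x * qFibNeg q x t (j + 2)) * q ^ (j + 3) / t)
    rw [zpow_neg, zpow_natCast]
    field_simp
    ring

lemma IsQFibSolution.comp_sub_zpow (hq : q ≠ 0) (d : ℤ) {F : ℤ → K}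
    (hF : IsQFibSolution q x (q ^ d * t) F) :
    IsQFibSolution q x t (fun m => F (m - d)) := by
  intro m
  have h := hF (m - d)
  rw [← mul_assoc, ← zpow_add₀ hq, sub_add_cancel] at h
  simpa only [sub_add_eq_add_sub] using h

lemma IsQFibSolution.eq_of_eq_at_zero_one (hq : q ≠ 0) (ht : t ≠ 0) {F G : ℤ → K}
    (hF : IsQFibSolution q x t F) (hG : IsQFibSolution q x t G) (h0 : F 0 = G 0)
    (h1 : F 1 = G 1) : F = G := by
  suffices h : ∀ m : ℤ, F m = G m ∧ F (m + 1) = G (m + 1) from funext fun m => (h m).1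
  intro m
  induction m using Int.induction_on with
  | zero => exact ⟨h0, by simpa using h1⟩
  | succ m ih =>
    refine ⟨ih.2, ?_⟩
    rw [add_assoc, one_add_one_eq_two, hF, hG, ih.1, ih.2]
  | pred m ih =>
    refine ⟨?_, by simpa using ih.1⟩
    have hF' := hF (-m - 1)
    have hG' := hG (-m - 1)
    rw [show -(m : ℤ) - 1 + 2 = -m + 1 by ring, sub_add_cancel] at hF' hG'
    refine mul_left_cancel₀ (mul_ne_zero (zpow_ne_zero (-(m : ℤ) - 1) hq) ht) ?_
    linear_combination hG' - hF' + ih.2 - x * ih.1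

lemma IsQFibSolution.mul_add_mul (a b : K) {F G : ℤ → K} (hF : IsQFibSolution q x t F)
    (hG : IsQFibSolution q x t G) : IsQFibSolution q x t (fun m => a * F m + b * G m) := by
  intro m
  simp only [hF m, hG m]
  ring

lemma isQFibSolution_qFib_div_comp_add_one (hq : q ≠ 0) (ht : t ≠ 0) :
    IsQFibSolution q x t (fun m => qFib q x (t / q) (m + 1)) := by
  have h : IsQFibSolution q x (q ^ (-1 : ℤ) * t) (qFib q x (t / q)) := by
    rw [zpow_neg_one, ← div_eq_inv_mul]
    exact isQFibSolution_qFib hq (div_ne_zero ht hq)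
  simpa only [sub_neg_eq_add] using h.comp_sub_zpow hq (-1)

lemma IsQFibSolution.eq_qFib_combination (hq : q ≠ 0) (ht : t ≠ 0) {F : ℤ → K}
    (hF : IsQFibSolution q x t F) :
    F = fun m => (F 1 - x * F 0) * qFib q x t m + F 0 * qFib q x (t / q) (m + 1) := by
  refine hF.eq_of_eq_at_zero_one hq ht
    ((isQFibSolution_qFib hq ht).mul_add_mul _ _ (isQFibSolution_qFib_div_comp_add_one hq ht))
    ?_ ?_
  · simp [qFib, qFibPos]
  · simp [qFib, qFibPos]
    ring

lemma exists_qFib_pow_mul_sub_eq (hq : q ≠ 0) (ht : t ≠ 0) (d : ℕ) :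
    ∃ u v : K, ∀ m : ℤ,
      qFib q x (q ^ d * t) (m - d) = u * qFib q x t m + v * qFib q x (t / q) (m + 1) := by
  have hF : IsQFibSolution q x (q ^ (d : ℤ) * t) (qFib q x (q ^ d * t)) := by
    rw [zpow_natCast]
    exact isQFibSolution_qFib hq (mul_ne_zero (pow_ne_zero d hq) ht)
  exact ⟨_, _, congrFun ((hF.comp_sub_zpow hq d).eq_qFib_combination hq ht)⟩

end

namespace Matrix

variable {R : Type*} [CommRing R] [IsDomain R] {m n : Type*} [Fintype m] [Fintype n]

lemma det_mul_eq_zero_of_card_lt [DecidableEq m] (A : Matrix m n R) (B : Matrix n m R)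
    (h : Fintype.card n < Fintype.card m) : (A * B).det = 0 := by
  by_contra hdet
  have hrank := (rank_mul_le_left A B).trans (rank_le_card_width A)
  rw [rank_of_det_ne_zero hdet] at hrank
  omega

lemma det_of_mul_add_mul_pow_eq_zero [DecidableEq m] (a b u v : m → R) {k : ℕ}
    (h : k + 1 < Fintype.card m) :
    (of fun i j => (a i * u j + b i * v j) ^ k).det = 0 := by
  have hfactor : (of fun i j => (a i * u j + b i * v j) ^ k) =
      (of fun i (r : Fin (k + 1)) => a i ^ (r : ℕ) * b i ^ (k - r) * (k.choose r : R)) *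
      of fun (r : Fin (k + 1)) j => u j ^ (r : ℕ) * v j ^ (k - r) := by
    ext i j
    simp only [mul_apply, of_apply, add_pow, ← Fin.sum_univ_eq_sum_range]
    refine Finset.sum_congr rfl fun r _ => ?_
    ring
  rw [hfactor]
  exact det_mul_eq_zero_of_card_lt _ _ (by rwa [Fintype.card_fin])

end Matrix

theorem det_qFib_pow_eq_zero'_general (q x s : K) (hq : q ≠ 0) (hs : s ≠ 0)
    (k ℓ : ℕ) (n : ℤ) :
    Matrix.det (Matrix.of fun i j : Fin (k + 2) =>
      qFib q x (q ^ ((j : ℕ) * ℓ) * s) (n + ℓ * ((i : ℕ) - (j : ℕ) : ℤ)) ^ k) = 0 := by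
  choose u v huv using exists_qFib_pow_mul_sub_eq (x := x) hq hs
  convert Matrix.det_of_mul_add_mul_pow_eq_zero (k := k)
    (fun i : Fin (k + 2) => qFib q x s (n + ℓ * i)) (fun i => qFib q x (s / q) (n + ℓ * i + 1))
    (fun j => u ((j : ℕ) * ℓ)) (fun j => v ((j : ℕ) * ℓ)) (by simp) using 5 with i j
  have hshift : n + ℓ * ((i : ℕ) - (j : ℕ) : ℤ) = n + ℓ * (i : ℕ) - ((j : ℕ) * ℓ : ℕ) := by
    push_cast
    ring
  rw [hshift, huv]
  ring

theorem det_qFib_pow_eq_zero' (q x s : K) (hq : q ≠ 0) (hs : s ≠ 0)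
    (k ℓ : ℕ) (hk : 1 ≤ k) (hℓ : 1 ≤ ℓ) (n : ℤ) :
    Matrix.det (Matrix.of fun i j : Fin (k + 2) =>
      qFib q x (q ^ ((j : ℕ) * ℓ) * s) (n + ℓ * ((i : ℕ) - (j : ℕ) : ℤ)) ^ k) = 0 :=
  det_qFib_pow_eq_zero'_general q x s hq hs k ℓ n
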